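/- Let T > 0 and define R(s,t) := ½(s^{1/3} + t^{1/3} − |t−s|^{1/3}) for s,t ≥ 0. Then lim_{ε→0⁺} ε^{−4/3} ∫_0^T ∫_0^T (R(t+ε, s+ε) − R(t, s+ε) − R(t+ε, s) + R(t,s)) ds dt = 0; indeed this planar-increment double integral is nonnegative and bounded above by 2(ε²(T+ε)^{1/3} + ε^{2+1/3}). -/

import Mathlib

open Set MeasureTheory Filter Topology intervalIntegral

/-- Covariance function of fractional Brownian motion with Hurst parameter `H = 1/6`. -/
noncomputable def fbmCovSixth (s t : ℝ) : ℝ :=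
  (s ^ ((1:ℝ)/3) + t ^ ((1:ℝ)/3) - |t - s| ^ ((1:ℝ)/3)) / 2

/-!
The planar increment of `fbmCovSixth` at `(t, s)` is the second difference
`(g (t - s + ε) + g (t - s - ε) - 2 g (t - s)) / 2` of `g x = |x| ^ (1/3)`. Since `g` is the second
derivative of `G x = 9/28 |x| ^ (7/3)`, integrating over `[0, T]²` gives the closed form
`G (T + ε) + G (T - ε) - 2 G T - 2 G ε`. It is nonnegative by convexity of `u ↦ u ^ (7/6)` together
with superadditivity of that power, and at most `ε² (T + ε) ^ (1/3)` because `G'' ≤ (T + ε) ^ (1/3)`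
on `[T - ε, T + ε]`; this is `o(ε ^ (4/3))`.
-/

lemma hasDerivAt_abs_rpow_mul_self {p : ℝ} (hp : 0 < p) (x : ℝ) :
    HasDerivAt (fun y : ℝ => |y| ^ p * y) ((p + 1) * |x| ^ p) x := by
  have hcont : Continuous fun y : ℝ => |y| ^ p :=
    continuous_abs.rpow_const fun _ => Or.inr hp.le
  refine hasDerivAt_of_hasDerivAt_of_ne' (x := 0) (g := fun y => (p + 1) * |y| ^ p)
    (fun y hy => ?_) (hcont.mul continuous_id).continuousAt
    (continuous_const.mul hcont).continuousAt x
  have hderiv : HasDerivAt (fun y : ℝ => |y| ^ p * y)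
      (SignType.sign y * p * |y| ^ (p - 1) * y + |y| ^ p * 1) y :=
    ((hasDerivAt_abs hy).rpow_const (Or.inl (abs_ne_zero.mpr hy))).mul (hasDerivAt_id' y)
  refine hderiv.congr_deriv ?_
  have hsign : (SignType.sign y : ℝ) * y = |y| := sign_mul_self y
  rw [Real.rpow_sub_one (abs_ne_zero.mpr hy)]
  field_simp
  linear_combination p * hsign

lemma add_sub_two_mul_le_mul_sq_of_hasDerivAt2_le {f f' f'' : ℝ → ℝ} {x h M : ℝ} (hh : 0 ≤ h)
    (hf : ∀ y, HasDerivAt f (f' y) y) (hf' : ∀ y, HasDerivAt f' (f'' y) y)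
    (hM : ∀ y ∈ Icc (x - h) (x + h), f'' y ≤ M) :
    f (x + h) + f (x - h) - 2 * f x ≤ M * h ^ 2 := by
  have hconv : ConvexOn ℝ (Icc (x - h) (x + h)) fun y => M / 2 * y ^ 2 - f y := by
    have hfc : Continuous f := Differentiable.continuous fun y => (hf y).differentiableAt
    refine convexOn_of_hasDerivWithinAt2_nonneg (convex_Icc _ _) (f' := fun y => M * y - f' y)
      (f'' := fun y => M - f'' y) ?_ (fun y _ => ?_) (fun y _ => ?_) (fun y hy => ?_)
    · exact Continuous.continuousOn (by fun_prop)
    · exact (((hasDerivAt_pow 2 y).const_mul (M / 2)).sub (hf y)).hasDerivWithinAt.congr_deriv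
        (by ring)
    · exact (((hasDerivAt_id y).const_mul M).sub (hf' y)).hasDerivWithinAt.congr_deriv (by simp)
    · exact sub_nonneg.2 (hM y (interior_subset hy))
  have hmid := hconv.2 (⟨le_rfl, by linarith⟩ : x - h ∈ Icc (x - h) (x + h))
    (⟨by linarith, le_rfl⟩ : x + h ∈ Icc (x - h) (x + h))
    (by norm_num : (0:ℝ) ≤ 1 / 2) (by norm_num : (0:ℝ) ≤ 1 / 2) (by norm_num)
  simp only [smul_eq_mul] at hmid
  rw [show 1 / 2 * (x - h) + 1 / 2 * (x + h) = x by ring] at hmid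
  nlinarith

lemma two_mul_abs_rpow_add_abs_rpow_le {p : ℝ} (hp : 2 ≤ p) (a b : ℝ) :
    2 * (|a| ^ p + |b| ^ p) ≤ |a + b| ^ p + |a - b| ^ p := by
  have habs : ∀ x : ℝ, |x| ^ p = (x ^ 2) ^ (p / 2) := fun x => by
    rw [← sq_abs, ← Real.rpow_natCast, ← Real.rpow_mul (abs_nonneg x)]
    congr 1
    ring
  have hq : 1 ≤ p / 2 := by linarith
  have hmid := (convexOn_rpow hq).2 (sq_nonneg (a + b)) (sq_nonneg (a - b))
    (by norm_num : (0:ℝ) ≤ 1 / 2) (by norm_num : (0:ℝ) ≤ 1 / 2) (by norm_num)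
  simp only [smul_eq_mul] at hmid
  rw [show 1 / 2 * (a + b) ^ 2 + 1 / 2 * (a - b) ^ 2 = a ^ 2 + b ^ 2 by ring] at hmid
  have hsuper := Real.add_rpow_le_rpow_add (sq_nonneg a) (sq_nonneg b) hq
  simp only [habs]
  linarith

lemma integral_integral_comp_sub {f F G : ℝ → ℝ} (hf : Continuous f)
    (hF : ∀ x, HasDerivAt F (f x) x) (hG : ∀ x, HasDerivAt G (F x) x) (T : ℝ) :
    ∫ t in (0:ℝ)..T, ∫ s in (0:ℝ)..T, f (t - s) = G T - 2 * G 0 + G (-T) := by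
  have hFc : Continuous F := Differentiable.continuous fun x => (hF x).differentiableAt
  have hinner : ∀ t, ∫ s in (0:ℝ)..T, f (t - s) = F t - F (t - T) := fun t => by
    rw [intervalIntegral.integral_comp_sub_left f,
      integral_eq_sub_of_hasDerivAt (fun x _ => hF x) (hf.intervalIntegrable _ _), sub_zero]
  simp only [hinner]
  rw [integral_eq_sub_of_hasDerivAt (f := fun t => G t - G (t - T))
    (fun t _ => (hG t).sub ((hG (t - T)).comp_sub_const t T))
    ((hFc.sub (hFc.comp (continuous_sub_right T))).intervalIntegrable _ _)]
  simp only [sub_self, zero_sub]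
  ring

noncomputable def fbmCovSixthIncrementIntegral (T ε : ℝ) : ℝ :=
  ∫ t in (0:ℝ)..T, ∫ s in (0:ℝ)..T,
    (fbmCovSixth (t + ε) (s + ε) - fbmCovSixth t (s + ε) - fbmCovSixth (t + ε) s + fbmCovSixth t s)

lemma fbmCovSixth_increment (t s ε : ℝ) :
    fbmCovSixth (t + ε) (s + ε) - fbmCovSixth t (s + ε) - fbmCovSixth (t + ε) s + fbmCovSixth t s
      = (|t - s + ε| ^ ((1:ℝ)/3) + |t - s - ε| ^ ((1:ℝ)/3) - 2 * |t - s| ^ ((1:ℝ)/3)) / 2 := by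
  unfold fbmCovSixth
  rw [show s + ε - (t + ε) = -(t - s) by ring, show s + ε - t = -(t - s - ε) by ring,
    show s - (t + ε) = -(t - s + ε) by ring, show s - t = -(t - s) by ring,
    abs_neg, abs_neg, abs_neg]
  ring

lemma hasDerivAt_abs_cbrt_primitive (x : ℝ) :
    HasDerivAt (fun y : ℝ => 3 / 4 * (|y| ^ ((1:ℝ)/3) * y)) (|x| ^ ((1:ℝ)/3)) x :=
  ((hasDerivAt_abs_rpow_mul_self (by norm_num) x).const_mul _).congr_deriv (by ring)

lemma hasDerivAt_abs_cbrt_primitive₂ (x : ℝ) :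
    HasDerivAt (fun y : ℝ => 9 / 28 * |y| ^ ((7:ℝ)/3)) (3 / 4 * (|x| ^ ((1:ℝ)/3) * x)) x := by
  refine ((hasDerivAt_abs_rpow x (by norm_num : (1:ℝ) < 7 / 3)).const_mul _).congr_deriv ?_
  norm_num
  ring

lemma fbmCovSixthIncrementIntegral_eq (T ε : ℝ) :
    fbmCovSixthIncrementIntegral T ε = 9 / 28 *
      (|T + ε| ^ ((7:ℝ)/3) + |T - ε| ^ ((7:ℝ)/3) - 2 * |T| ^ ((7:ℝ)/3) - 2 * |ε| ^ ((7:ℝ)/3)) := by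
  unfold fbmCovSixthIncrementIntegral
  simp only [fbmCovSixth_increment]
  rw [integral_integral_comp_sub (f := fun x => (|x + ε| ^ ((1:ℝ)/3) + |x - ε| ^ ((1:ℝ)/3)
      - 2 * |x| ^ ((1:ℝ)/3)) / 2)
    (F := fun x => (3 / 4 * (|x + ε| ^ ((1:ℝ)/3) * (x + ε)) + 3 / 4 * (|x - ε| ^ ((1:ℝ)/3) * (x - ε))
      - 2 * (3 / 4 * (|x| ^ ((1:ℝ)/3) * x))) / 2)
    (G := fun x => (9 / 28 * |x + ε| ^ ((7:ℝ)/3) + 9 / 28 * |x - ε| ^ ((7:ℝ)/3)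
      - 2 * (9 / 28 * |x| ^ ((7:ℝ)/3))) / 2)
    (by fun_prop (disch := norm_num))
    (fun x => ((((hasDerivAt_abs_cbrt_primitive (x + ε)).comp_add_const x ε).add
      ((hasDerivAt_abs_cbrt_primitive (x - ε)).comp_sub_const x ε)).sub
      ((hasDerivAt_abs_cbrt_primitive x).const_mul 2)).div_const 2)
    (fun x => ((((hasDerivAt_abs_cbrt_primitive₂ (x + ε)).comp_add_const x ε).add
      ((hasDerivAt_abs_cbrt_primitive₂ (x - ε)).comp_sub_const x ε)).sub
      ((hasDerivAt_abs_cbrt_primitive₂ x).const_mul 2)).div_const 2)]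
  rw [show -T + ε = -(T - ε) by ring, show -T - ε = -(T + ε) by ring, zero_sub, zero_add]
  simp only [abs_neg, abs_zero, Real.zero_rpow (by norm_num : (7:ℝ)/3 ≠ 0)]
  ring

lemma fbmCovSixthIncrementIntegral_nonneg (T ε : ℝ) : 0 ≤ fbmCovSixthIncrementIntegral T ε := by
  rw [fbmCovSixthIncrementIntegral_eq]
  have := two_mul_abs_rpow_add_abs_rpow_le (by norm_num : (2:ℝ) ≤ 7 / 3) T ε
  nlinarith

lemma fbmCovSixthIncrementIntegral_le {T ε : ℝ} (hT : 0 ≤ T) (hε : 0 ≤ ε) :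
    fbmCovSixthIncrementIntegral T ε ≤ ε ^ 2 * (T + ε) ^ ((1:ℝ)/3) := by
  have hsecond := add_sub_two_mul_le_mul_sq_of_hasDerivAt2_le (x := T) (M := (T + ε) ^ ((1:ℝ)/3))
    hε hasDerivAt_abs_cbrt_primitive₂ hasDerivAt_abs_cbrt_primitive fun y hy =>
      Real.rpow_le_rpow (abs_nonneg y) (abs_le.2 ⟨by linarith [hy.1], hy.2⟩) (by norm_num)
  have hε73 : 0 ≤ |ε| ^ ((7:ℝ)/3) := by positivity
  rw [fbmCovSixthIncrementIntegral_eq]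
  linarith

lemma tendsto_rpow_mul_fbmCovSixthIncrementIntegral {T : ℝ} (hT : 0 ≤ T) :
    Tendsto (fun ε : ℝ => ε ^ (-(4:ℝ)/3) * fbmCovSixthIncrementIntegral T ε) (𝓝[>] 0) (𝓝 0) := by
  have hbound : Tendsto (fun ε : ℝ => ε ^ ((2:ℝ)/3) * (T + ε) ^ ((1:ℝ)/3)) (𝓝[>] 0) (𝓝 0) := by
    have hcont : ContinuousAt (fun ε : ℝ => ε ^ ((2:ℝ)/3) * (T + ε) ^ ((1:ℝ)/3)) 0 := by
      fun_prop (disch := norm_num)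
    simpa using hcont.tendsto.mono_left nhdsWithin_le_nhds
  refine squeeze_zero' ?_ ?_ hbound <;> filter_upwards [self_mem_nhdsWithin] with ε (hε : 0 < ε)
  · exact mul_nonneg (by positivity) (fbmCovSixthIncrementIntegral_nonneg T ε)
  · have hpow : ε ^ (-(4:ℝ)/3) * ε ^ 2 = ε ^ ((2:ℝ)/3) := by
      rw [← Real.rpow_natCast, ← Real.rpow_add hε]
      norm_num
    calc ε ^ (-(4:ℝ)/3) * fbmCovSixthIncrementIntegral T ε
        ≤ ε ^ (-(4:ℝ)/3) * (ε ^ 2 * (T + ε) ^ ((1:ℝ)/3)) := by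
          gcongr
          exact fbmCovSixthIncrementIntegral_le hT hε.le
      _ = ε ^ ((2:ℝ)/3) * (T + ε) ^ ((1:ℝ)/3) := by rw [← mul_assoc, hpow]

theorem stmt19 (T : ℝ) (hT : 0 < T) :
    Tendsto (fun ε : ℝ => ε ^ (-(4:ℝ)/3) *
        ∫ t in (0:ℝ)..T, ∫ s in (0:ℝ)..T,
          (fbmCovSixth (t + ε) (s + ε) - fbmCovSixth t (s + ε)
            - fbmCovSixth (t + ε) s + fbmCovSixth t s))
      (𝓝[>] 0) (𝓝 0) ∧
    ∀ ε : ℝ, 0 < ε →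
      (0 ≤ ∫ t in (0:ℝ)..T, ∫ s in (0:ℝ)..T,
          (fbmCovSixth (t + ε) (s + ε) - fbmCovSixth t (s + ε)
            - fbmCovSixth (t + ε) s + fbmCovSixth t s)) ∧
      (∫ t in (0:ℝ)..T, ∫ s in (0:ℝ)..T,
          (fbmCovSixth (t + ε) (s + ε) - fbmCovSixth t (s + ε)
            - fbmCovSixth (t + ε) s + fbmCovSixth t s))
        ≤ 2 * (ε ^ 2 * (T + ε) ^ ((1:ℝ)/3) + ε ^ ((2:ℝ) + 1/3)) := by
  refine ⟨tendsto_rpow_mul_fbmCovSixthIncrementIntegral hT.le, fun ε hε =>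
    ⟨fbmCovSixthIncrementIntegral_nonneg T ε, ?_⟩⟩
  have hle := fbmCovSixthIncrementIntegral_le hT.le hε.le
  have hpos : 0 ≤ ε ^ 2 * (T + ε) ^ ((1:ℝ)/3) + 2 * ε ^ ((2:ℝ) + 1/3) := by positivity
  exact hle.trans (by linarith)
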